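/- For 1 ≤ i ≤ n, let h = j′(i). Then the minimum of α(i,j) over j ∈ [i,n] is attained at j = h or at j = h−1: if h > i, then for every j ∈ [i,n] one has min{α(i,h−1), α(i,h)} ≤ α(i,j); and if h = i, then for every j ∈ [i,n] one has α(i,h) ≤ α(i,j). -/
import Mathlib


/-- Path distance along the path: `d_P(i,j) = Σ_{k=i}^{j-1} dist(v_k, v_{k+1})`. -/
noncomputable def dP {X : Type*} [MetricSpace X] (v : ℕ → X) (i j : ℕ) : ℝ :=
  ∑ k ∈ Finset.Ico i j, dist (v k) (v (k + 1))

/-- `γ(i,j) = dist(v_i, v_j) + d_P(j,n)`. -/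
noncomputable def gam {X : Type*} [MetricSpace X] (v : ℕ → X) (n i j : ℕ) : ℝ :=
  dist (v i) (v j) + dP v j n

/-- `d_C(i,j,k) = min{d_P(i,k), dist(v_i,v_j) + d_P(k,j)}`: the distance from `v_i`
to `v_k` in the cycle formed by the subpath from `v_i` to `v_j` together with a new
edge `v_i v_j` of length `dist(v_i,v_j)`. -/
noncomputable def dC {X : Type*} [MetricSpace X] (v : ℕ → X) (i j k : ℕ) : ℝ :=
  min (dP v i k) (dist (v i) (v j) + dP v k j)

/-- `β(i,j) = max_{i ≤ k ≤ j} d_C(i,j,k)`. -/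
noncomputable def beta {X : Type*} [MetricSpace X] (v : ℕ → X) (i j : ℕ) : ℝ :=
  ⨆ k : Finset.Icc i j, dC v i j (k : ℕ)

/-- `h = j′(i)`: `h` is the smallest `j ∈ [i,n]` with `γ(i,j) ≤ β(i,j)`. -/
def IsJp {X : Type*} [MetricSpace X] (v : ℕ → X) (n i h : ℕ) : Prop :=
  h ∈ Finset.Icc i n ∧ gam v n i h ≤ beta v i h ∧
    ∀ j ∈ Finset.Icc i n, gam v n i j ≤ beta v i j → h ≤ j

/-- `α(i,j) = max{β(i,j), γ(i,j)}`. -/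
noncomputable def alp {X : Type*} [MetricSpace X] (v : ℕ → X) (n i j : ℕ) : ℝ :=
  max (beta v i j) (gam v n i j)

lemma dP_nonneg {X : Type*} [MetricSpace X] (v : ℕ → X) (i j : ℕ) : 0 ≤ dP v i j :=
  Finset.sum_nonneg fun _ _ => dist_nonneg

lemma dP_add {X : Type*} [MetricSpace X] (v : ℕ → X) {a b c : ℕ} (hab : a ≤ b) (hbc : b ≤ c) :
    dP v a b + dP v b c = dP v a c :=
  Finset.sum_Ico_consecutive _ hab hbc

lemma dP_mono {X : Type*} [MetricSpace X] (v : ℕ → X) {a b c : ℕ} (hbc : b ≤ c) :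
    dP v a b ≤ dP v a c :=
  Finset.sum_le_sum_of_subset_of_nonneg (Finset.Ico_subset_Ico le_rfl hbc)
    (fun _ _ _ => dist_nonneg)

lemma dist_le_dP {X : Type*} [MetricSpace X] (v : ℕ → X) {a b : ℕ} (hab : a ≤ b) :
    dist (v a) (v b) ≤ dP v a b := by
  induction b, hab using Nat.le_induction with
  | base => simp [dP]
  | succ b hab ih =>
      calc dist (v a) (v (b+1)) ≤ dist (v a) (v b) + dist (v b) (v (b+1)) := dist_triangle _ _ _
        _ ≤ dP v a b + dist (v b) (v (b+1)) := by linarith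
        _ = dP v a (b+1) := by
            rw [dP, dP, Finset.sum_Ico_succ_top hab]

lemma gam_anti {X : Type*} [MetricSpace X] (v : ℕ → X) {n i j j' : ℕ}
    (hjj : j ≤ j') (hj'n : j' ≤ n) : gam v n i j' ≤ gam v n i j := by
  have h1 : dist (v i) (v j') ≤ dist (v i) (v j) + dP v j j' :=
    (dist_triangle _ (v j) _).trans (by linarith [dist_le_dP v hjj])
  have h2 : dP v j j' + dP v j' n = dP v j n := dP_add v hjj hj'n
  simp only [gam]
  linarith

lemma dC_mono {X : Type*} [MetricSpace X] (v : ℕ → X) {i j j' k : ℕ}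
    (hkj : k ≤ j) (hjj : j ≤ j') : dC v i j k ≤ dC v i j' k := by
  have h1 : dist (v i) (v j) ≤ dist (v i) (v j') + dP v j j' := by
    have := dist_triangle (v i) (v j') (v j)
    rw [dist_comm (v j') (v j)] at this
    linarith [dist_le_dP v hjj]
  have h2 : dP v k j + dP v j j' = dP v k j' := dP_add v hkj hjj
  exact min_le_min le_rfl (by linarith)

lemma beta_bdd {X : Type*} [MetricSpace X] (v : ℕ → X) (i j : ℕ) :
    BddAbove (Set.range fun k : Finset.Icc i j => dC v i j (k : ℕ)) := by
  refine ⟨dP v i j, ?_⟩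
  rintro x ⟨k, rfl⟩
  exact (min_le_left _ _).trans (dP_mono v (Finset.mem_Icc.mp k.2).2)

lemma beta_mono {X : Type*} [MetricSpace X] (v : ℕ → X) {i j j' : ℕ}
    (hij : i ≤ j) (hjj : j ≤ j') : beta v i j ≤ beta v i j' := by
  haveI : Nonempty (Finset.Icc i j) := ⟨⟨i, Finset.mem_Icc.mpr ⟨le_rfl, hij⟩⟩⟩
  refine ciSup_le fun k => ?_
  obtain ⟨hik, hkj⟩ := Finset.mem_Icc.mp k.2
  calc dC v i j (k : ℕ) ≤ dC v i j' (k : ℕ) := dC_mono v hkj hjj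
    _ ≤ beta v i j' := le_ciSup (beta_bdd v i j') ⟨(k : ℕ), Finset.mem_Icc.mpr ⟨hik, hkj.trans hjj⟩⟩

/-- For `1 ≤ i ≤ n`, let `h = j′(i)`. Then the minimum of `α(i,j)` over
`j ∈ [i,n]` is attained at `j = h` or `j = h−1`: if `h > i`, then for every
`j ∈ [i,n]` one has `min{α(i,h−1), α(i,h)} ≤ α(i,j)`; and if `h = i`, then for
every `j ∈ [i,n]` one has `α(i,h) ≤ α(i,j)`. -/
theorem stmt10 {X : Type*} [MetricSpace X] (n : ℕ) (hn : 1 ≤ n) (v : ℕ → X)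
    (hv : Set.InjOn v (Set.Icc 1 n))
    (i h : ℕ) (hi : 1 ≤ i) (hin : i ≤ n) (hh : IsJp v n i h) :
    (i < h → ∀ j ∈ Finset.Icc i n, min (alp v n i (h - 1)) (alp v n i h) ≤ alp v n i j) ∧
    (h = i → ∀ j ∈ Finset.Icc i n, alp v n i h ≤ alp v n i j) := by
  obtain ⟨hmem, hgb, hmin⟩ := hh
  obtain ⟨hih, hhn⟩ := Finset.mem_Icc.mp hmem
  -- at j ≥ h, α(i,h) ≤ α(i,j)
  have key : ∀ j, h ≤ j → j ≤ n → alp v n i h ≤ alp v n i j := by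
    intro j hhj hjn
    have : alp v n i h = beta v i h := max_eq_left hgb
    rw [this]
    exact (beta_mono v hih hhj).trans (le_max_left _ _)
  constructor
  · intro hilt j hj
    obtain ⟨hij, hjn⟩ := Finset.mem_Icc.mp hj
    rcases le_or_gt h j with hc | hc
    · exact (min_le_right _ _).trans (key j hc hjn)
    · -- j < h, so j ≤ h - 1
      have hjh1 : j ≤ h - 1 := Nat.le_sub_one_of_lt hc
      have hh1n : h - 1 ≤ n := le_trans (Nat.sub_le _ _) hhn
      have hih1 : i ≤ h - 1 := Nat.le_sub_one_of_lt hilt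
      have hlt : ¬ gam v n i (h-1) ≤ beta v i (h-1) := by
        intro hle
        have := hmin (h-1) (Finset.mem_Icc.mpr ⟨hih1, hh1n⟩) hle
        omega
      have halp : alp v n i (h-1) = gam v n i (h-1) :=
        max_eq_right (le_of_not_ge hlt)
      calc min (alp v n i (h - 1)) (alp v n i h) ≤ alp v n i (h-1) := min_le_left _ _
        _ = gam v n i (h-1) := halp
        _ ≤ gam v n i j := gam_anti v hjh1 hh1n
        _ ≤ alp v n i j := le_max_right _ _
  · intro hhi j hj
    obtain ⟨hij, hjn⟩ := Finset.mem_Icc.mp hj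
    exact key j (hhi ▸ hij) hjn
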